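/- arXiv:2005.07454 — 3 statements merged into one kernel-verified Lean document; each statement's English description precedes it below -/
import Mathlib

section
/- Given vectors c, d ∈ ℂ^n with c ≠ 0, there exists a symmetric n×n complex matrix M with M c = d. -/
open Matrix

/-- Given c ≠ 0 and d in ℂⁿ there is a symmetric matrix M with M c = d. -/
theorem exists_symmetric_mulVec (n : ℕ) (c d : Fin n → ℂ) (hc : c ≠ 0) :
    ∃ M : Matrix (Fin n) (Fin n) ℂ, Mᵀ = M ∧ M.mulVec c = d := by
  obtain ⟨i, hi⟩ : ∃ i, c i ≠ 0 := Function.ne_iff.mp hc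
  set u : Fin n → ℂ := fun j => if j = i then (c i)⁻¹ else 0 with hu
  set s : ℂ := ∑ l, d l * c l with hs
  refine ⟨Matrix.of fun j k => d j * u k + u j * d k - s * u j * u k, ?_, ?_⟩
  · ext j k
    simp [Matrix.transpose_apply]
    ring
  · have huc : ∑ k, u k * c k = 1 := by
      rw [Finset.sum_eq_single i]
      · simp [hu, inv_mul_cancel₀ hi]
      · intro b _ hb; simp [hu, hb]
      · simp
    have hdc : ∑ k, d k * c k = s := rfl
    funext j
    have : (∑ k, (d j * u k + u j * d k - s * u j * u k) * c k)
        = d j * (∑ k, u k * c k) + u j * (∑ k, d k * c k)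
          - s * u j * (∑ k, u k * c k) := by
      rw [Finset.mul_sum, Finset.mul_sum, Finset.mul_sum]
      rw [← Finset.sum_add_distrib, ← Finset.sum_sub_distrib]
      exact Finset.sum_congr rfl fun k _ => by ring
    simp only [Matrix.mulVec, Matrix.of_apply, dotProduct]
    rw [this, huc, hdc]
    ring
end

section
/- Let K ≥ 3 and let Φ_K : (ℂ^3)^K → ℂ^4 be the map sending (G_1,…,G_K) to the last row of the product M_1(G_1)⋯M_K(G_K), where for odd k, M_k(x,y,z) is the 4×4 lower elementary symplectic matrix ((1,0,0,0),(0,1,0,0),(x,y,1,0),(y,z,0,1)), and for even k, M_k(x,y,z) = ((1,0,x,y),(0,1,y,z),(0,0,1,0),(0,0,0,1)). Then the image of Φ_K contains ℂ^4 ∖ {0}; in fact every nonzero vector (a_1,a_2,a_3,a_4) ∈ ℂ^4 is the last row of such a product. -/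
/-!
A row vector `(p, q, r, s)` is sent by the upper elementary matrix with block `U` to
`(p, q, (r, s) + (p, q) U)` and by the lower one to `((p, q) + (r, s) U, r, s)`, and a nonzero
vector of `F²` is sent to any prescribed vector by some symmetric `U`. The last row of the first
factor is `(y, z, 0, 1)`. If `(a₃, a₄) ≠ 0`, take `(y, z) = (1, 0)`, let the second factor produce
`(1, 0, a₃, a₄)` and the third correct the first half to `(a₁, a₂)`. Otherwise take
`(y, z) = (a₁, a₂) ≠ 0` and let the second factor turn the last half `(0, 1)` into `0`. All
further factors get zero blocks, so they are identity matrices.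
-/

open Matrix

section

variable {R : Type*} [CommRing R]

def lowerSymp (g : R × R × R) : Matrix (Fin 4) (Fin 4) R :=
  !![1, 0, 0, 0; 0, 1, 0, 0; g.1, g.2.1, 1, 0; g.2.1, g.2.2, 0, 1]

def upperSymp (g : R × R × R) : Matrix (Fin 4) (Fin 4) R :=
  !![1, 0, g.1, g.2.1; 0, 1, g.2.1, g.2.2; 0, 0, 1, 0; 0, 0, 0, 1]

@[simp]
lemma lowerSymp_zero : lowerSymp (0 : R × R × R) = 1 := by
  ext i j; fin_cases i <;> fin_cases j <;> rfl

@[simp]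
lemma upperSymp_zero : upperSymp (0 : R × R × R) = 1 := by
  ext i j; fin_cases i <;> fin_cases j <;> rfl

lemma lowerSymp_apply_three (x y z : R) : lowerSymp (x, y, z) 3 = ![y, z, 0, 1] := by
  ext j; fin_cases j <;> rfl

lemma vecMul_lowerSymp (p q r s x y z : R) :
    ![p, q, r, s] ᵥ* lowerSymp (x, y, z) = ![p + r * x + s * y, q + r * y + s * z, r, s] := by
  ext j; fin_cases j <;> simp [lowerSymp, vecMul, dotProduct, Fin.sum_univ_four]

lemma vecMul_upperSymp (p q r s x y z : R) :
    ![p, q, r, s] ᵥ* upperSymp (x, y, z) = ![p, q, r + p * x + q * y, s + p * y + q * z] := by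
  ext j; fin_cases j <;> simp [upperSymp, vecMul, dotProduct, Fin.sum_univ_four] <;> ring

end

lemma List.prod_ofFn_add_of_eq_one {M : Type*} [Monoid M] {m n : ℕ} (f : Fin (m + n) → M)
    (hf : ∀ j, f (Fin.natAdd m j) = 1) :
    (List.ofFn f).prod = (List.ofFn fun i : Fin m => f (Fin.castAdd n i)).prod := by
  have tail : (List.ofFn fun j : Fin n => f (Fin.natAdd m j)).prod = 1 :=
    List.prod_eq_one (by simp [hf])
  rw [List.ofFn_add, List.prod_append, tail, mul_one]
  rfl

section

variable {F : Type*} [Field F]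

lemma exists_symmetric_vecMul_eq {w₁ w₂ : F} (hw : w₁ ≠ 0 ∨ w₂ ≠ 0) (v₁ v₂ : F) :
    ∃ x y z : F, w₁ * x + w₂ * y = v₁ ∧ w₁ * y + w₂ * z = v₂ := by
  by_cases h₁ : w₁ = 0
  · have h₂ : w₂ ≠ 0 := hw.resolve_left (not_not.mpr h₁)
    exact ⟨0, v₁ / w₂, v₂ / w₂, by field_simp; simp [h₁], by field_simp; simp [h₁]⟩
  · exact ⟨(v₁ - w₂ * (v₂ / w₁)) / w₁, v₂ / w₁, 0, by field_simp; ring, by field_simp; ring⟩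

lemma exists_lastRow_lowerSymp_mul_upperSymp_mul_lowerSymp {a : Fin 4 → F} (ha : a ≠ 0) :
    ∃ g₀ g₁ g₂ : F × F × F, (lowerSymp g₀ * upperSymp g₁ * lowerSymp g₂) 3 = a := by
  have lastRow (y₀ z₀ : F) (g₁ g₂ : F × F × F) :
      (lowerSymp (0, y₀, z₀) * upperSymp g₁ * lowerSymp g₂) 3 =
        ![y₀, z₀, 0, 1] ᵥ* upperSymp g₁ ᵥ* lowerSymp g₂ := by
    rw [mul_apply_eq_vecMul, mul_apply_eq_vecMul, lowerSymp_apply_three]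
  by_cases hlow : a 2 = 0 ∧ a 3 = 0
  · have hhigh : a 0 ≠ 0 ∨ a 1 ≠ 0 := by
      by_contra! h
      exact ha (by ext j; fin_cases j <;> simp [h, hlow])
    obtain ⟨x, y, z, h₂, h₃⟩ := exists_symmetric_vecMul_eq hhigh 0 (-1)
    refine ⟨(0, a 0, a 1), (x, y, z), 0, ?_⟩
    rw [lastRow, vecMul_upperSymp]
    ext j; fin_cases j <;> simp [hlow]
    · exact h₂
    · linear_combination h₃
  · obtain ⟨x, y, z, h₀, h₁⟩ := exists_symmetric_vecMul_eq (not_and_or.mp hlow) (a 0 - 1) (a 1)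
    refine ⟨(0, 1, 0), (a 2, a 3 - 1, 0), (x, y, z), ?_⟩
    rw [lastRow, vecMul_upperSymp, vecMul_lowerSymp]
    ext j; fin_cases j <;> simp
    · linear_combination h₀
    · exact h₁

end

/-- Surjectivity of the last-row map for products of K ≥ 3 elementary symplectic 4×4 matrices:
every nonzero vector of ℂ⁴ is the last row of such a product, alternating lower and upper
elementary symplectic matrices (starting with a lower one). -/
theorem lastRow_surjective (K : ℕ) (hK : 3 ≤ K) (a : Fin 4 → ℂ) (ha : a ≠ 0) :
    ∃ G : Fin K → ℂ × ℂ × ℂ,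
      (List.ofFn (fun i : Fin K =>
        if i.val % 2 = 0 then
          (!![1, 0, 0, 0;
              0, 1, 0, 0;
              (G i).1, (G i).2.1, 1, 0;
              (G i).2.1, (G i).2.2, 0, 1] : Matrix (Fin 4) (Fin 4) ℂ)
        else
          !![1, 0, (G i).1, (G i).2.1;
             0, 1, (G i).2.1, (G i).2.2;
             0, 0, 1, 0;
             0, 0, 0, 1])).prod 3 = a := by
  obtain ⟨n, rfl⟩ : ∃ n, K = 3 + n := ⟨K - 3, by omega⟩
  obtain ⟨g₀, g₁, g₂, hg⟩ := exists_lastRow_lowerSymp_mul_upperSymp_mul_lowerSymp ha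
  refine ⟨fun i => if h : i.val < 3 then ![g₀, g₁, g₂] ⟨i, h⟩ else 0, ?_⟩
  change (List.ofFn fun i : Fin (3 + n) =>
    if i.val % 2 = 0 then lowerSymp _ else upperSymp _).prod 3 = a
  rw [List.prod_ofFn_add_of_eq_one _ fun j => by simp]
  simpa [List.ofFn_succ, mul_assoc] using hg
end

section
/- Let (a_3,a_4) ∈ ℂ² with (a_3,a_4) ∉ {(0,0),(0,1)}. The variety G = {(z_2,z_3,w_1,w_2,w_3) ∈ ℂ^5 : z_2 w_1 + z_3 w_2 = a_3, 1 + z_2 w_2 + z_3 w_3 = a_4} is a smooth, connected 3-dimensional complex manifold: it is covered by the two charts {z_2 ≠ 0} ≅ ℂ* × ℂ × ℂ (solving for w_1, w_2 — or equivalently expressing two of the w-variables) and {z_3 ≠ 0}, which have nonempty intersection. -/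
/-!
Each equation is linear in `w` with coefficients in `z`. Where `z₂ ≠ 0` one solves the second
equation for `w₂` and then the first for `w₁`; where `z₃ ≠ 0` one does the same after the coordinate
swap `z₂ ↔ z₃`, `w₁ ↔ w₃`. These charts are copies of `ℂ* × ℂ × ℂ`, hence connected, they cover the
fiber unless `(a₃, a₄) = (0, 1)`, and they meet, so the fiber is connected. On either chart a `2 × 2`
minor of the Jacobian is a power of the nonvanishing coordinate, so the Jacobian has rank `2`.
-/

open Matrix

theorem Matrix.rank_eq_card_of_det_submatrix_ne_zero {m n K : Type*} [Fintype m] [Fintype n]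
    [DecidableEq m] [Field K] (A : Matrix m n K) (c : m → n) (h : (A.submatrix id c).det ≠ 0) :
    A.rank = Fintype.card m :=
  le_antisymm A.rank_le_card_height <|
    (rank_of_isUnit _ ((isUnit_iff_isUnit_det _).2 h.isUnit)).symm.le.trans
      (A.rank_submatrix_le id c)

theorem rank_jacobian_eq_two {K : Type*} [Field K] {z₂ z₃ w₁ w₂ w₃ : K} (h : z₂ ≠ 0 ∨ z₃ ≠ 0) :
    (!![w₁, w₂, z₂, z₃, 0; w₂, w₃, 0, z₂, z₃] : Matrix (Fin 2) (Fin 5) K).rank = 2 := by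
  rcases h with h | h
  · simpa using Matrix.rank_eq_card_of_det_submatrix_ne_zero _ ![2, 3] (by simpa [det_fin_two])
  · simpa using Matrix.rank_eq_card_of_det_submatrix_ne_zero _ ![3, 4] (by simpa [det_fin_two])

instance : ConnectedSpace {c : ℂ // c ≠ 0} :=
  isConnected_iff_connectedSpace.1 <|
    isConnected_compl_singleton_of_one_lt_rank (by simp [Complex.rank_real_complex]) 0

namespace GenericFiber

def swapZW {X : Type*} [TopologicalSpace X] : (Fin 5 → X) ≃ₜ (Fin 5 → X) where
  toFun p := ![p 1, p 0, p 4, p 3, p 2]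
  invFun p := ![p 1, p 0, p 4, p 3, p 2]
  left_inv p := by funext i; fin_cases i <;> rfl
  right_inv p := by funext i; fin_cases i <;> rfl
  continuous_toFun := by fun_prop
  continuous_invFun := by fun_prop

variable {K : Type*} [Field K]

/-- Coordinates `p = (z₂, z₃, w₁, w₂, w₃)`. -/
def fiber (a₃ a₄ : K) : Set (Fin 5 → K) :=
  {p | p 0 * p 2 + p 1 * p 3 = a₃ ∧ 1 + p 0 * p 3 + p 1 * p 4 = a₄}

theorem ne_zero_or_ne_zero {a₃ a₄ : K} (h : (a₃, a₄) ≠ (0, 1)) {p : Fin 5 → K}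
    (hp : p ∈ fiber a₃ a₄) : p 0 ≠ 0 ∨ p 1 ≠ 0 := by
  by_contra! h₀
  obtain ⟨e₃, e₄⟩ := hp
  simp only [h₀.1, h₀.2, zero_mul, add_zero] at e₃ e₄
  exact h (by rw [← e₃, ← e₄])

theorem exists_mem_ne_zero_ne_zero (a₃ a₄ : K) : ∃ p ∈ fiber a₃ a₄, p 0 ≠ 0 ∧ p 1 ≠ 0 :=
  ⟨![1, 1, a₃, 0, a₄ - 1], by simp [fiber], one_ne_zero, one_ne_zero⟩

def solveW₁W₂ (a₃ a₄ z₂ z₃ w₃ : K) : Fin 5 → K :=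
  let w₂ := (a₄ - 1 - z₃ * w₃) / z₂
  ![z₂, z₃, (a₃ - z₃ * w₂) / z₂, w₂, w₃]

theorem solveW₁W₂_mem (a₃ a₄ : K) {z₂ : K} (hz₂ : z₂ ≠ 0) (z₃ w₃ : K) :
    solveW₁W₂ a₃ a₄ z₂ z₃ w₃ ∈ fiber a₃ a₄ := by
  constructor <;> simp only [solveW₁W₂, Fin.isValue, cons_val_zero, cons_val, cons_val_one] <;>
    field_simp <;> ring

theorem solveW₁W₂_eq {a₃ a₄ : K} {p : Fin 5 → K} (hp : p ∈ fiber a₃ a₄) (hp₀ : p 0 ≠ 0) :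
    solveW₁W₂ a₃ a₄ (p 0) (p 1) (p 4) = p := by
  obtain ⟨e₃, e₄⟩ := hp
  have hw₂ : (a₄ - 1 - p 1 * p 4) / p 0 = p 3 := by
    rw [div_eq_iff hp₀]; linear_combination -e₄
  have hw₁ : (a₃ - p 1 * p 3) / p 0 = p 2 := by
    rw [div_eq_iff hp₀]; linear_combination -e₃
  funext i
  fin_cases i <;> simp [solveW₁W₂, hw₁, hw₂]

variable [TopologicalSpace K]

theorem swapZW_mem_iff {a₃ a₄ : K} {p : Fin 5 → K} :
    swapZW p ∈ fiber (a₄ - 1) (a₃ + 1) ↔ p ∈ fiber a₃ a₄ := by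
  simp only [fiber, swapZW, Homeomorph.homeomorph_mk_coe, Equiv.coe_fn_mk, Set.mem_ofPred_eq,
    Matrix.cons_val_zero, Matrix.cons_val, Matrix.cons_val_one]
  constructor
  · rintro ⟨e₁, e₂⟩
    exact ⟨by linear_combination e₂, by linear_combination e₁⟩
  · rintro ⟨e₃, e₄⟩
    exact ⟨by linear_combination e₄, by linear_combination e₃⟩

variable [IsTopologicalDivisionRing K]

def chartZ₂ (a₃ a₄ : K) :
    {p : Fin 5 → K // p ∈ fiber a₃ a₄ ∧ p 0 ≠ 0} ≃ₜ {c : K // c ≠ 0} × K × K where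
  toFun p := (⟨p.1 0, p.2.2⟩, p.1 1, p.1 4)
  invFun q := ⟨solveW₁W₂ a₃ a₄ q.1 q.2.1 q.2.2, solveW₁W₂_mem a₃ a₄ q.1.2 _ _, q.1.2⟩
  left_inv p := Subtype.ext (solveW₁W₂_eq p.2.1 p.2.2)
  right_inv q := rfl
  continuous_toFun := by
    have hc (i : Fin 5) :
        Continuous fun p : {p : Fin 5 → K // p ∈ fiber a₃ a₄ ∧ p 0 ≠ 0} => p.1 i :=
      (continuous_apply i).comp continuous_subtype_val
    exact ((hc 0).subtype_mk _).prodMk ((hc 1).prodMk (hc 4))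
  continuous_invFun := by
    refine Continuous.subtype_mk (continuous_pi fun i => ?_) _
    fin_cases i <;>
      simp only [solveW₁W₂, Fin.mk_one, Fin.zero_eta, Fin.reduceFinMk, Fin.isValue, cons_val_zero,
        cons_val_one, cons_val] <;>
      fun_prop (disch := exact fun q => q.1.2)

def chartZ₃ (a₃ a₄ : K) :
    {p : Fin 5 → K // p ∈ fiber a₃ a₄ ∧ p 1 ≠ 0} ≃ₜ {c : K // c ≠ 0} × K × K :=
  (swapZW.subtype fun _ => and_congr swapZW_mem_iff.symm Iff.rfl).trans
    (chartZ₂ (a₄ - 1) (a₃ + 1))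

theorem isConnected_fiber {a₃ a₄ : ℂ} (h : (a₃, a₄) ≠ (0, 1)) : IsConnected (fiber a₃ a₄) := by
  have hunion : fiber a₃ a₄ =
      {p | p ∈ fiber a₃ a₄ ∧ p 0 ≠ 0} ∪ {p | p ∈ fiber a₃ a₄ ∧ p 1 ≠ 0} := by
    ext p
    constructor
    · exact fun hp => (ne_zero_or_ne_zero h hp).imp (⟨hp, ·⟩) (⟨hp, ·⟩)
    · rintro (⟨hp, -⟩ | ⟨hp, -⟩) <;> exact hp
  obtain ⟨p, hp, hp₀, hp₁⟩ := exists_mem_ne_zero_ne_zero a₃ a₄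
  rw [hunion]
  exact IsConnected.union ⟨p, ⟨hp, hp₀⟩, ⟨hp, hp₁⟩⟩
    (isConnected_iff_connectedSpace.2 ((chartZ₂ a₃ a₄).connectedSpace_iff.2 inferInstance))
    (isConnected_iff_connectedSpace.2 ((chartZ₃ a₃ a₄).connectedSpace_iff.2 inferInstance))

end GenericFiber

open GenericFiber

theorem generic_fiber_smooth_connected_general (a₃ a₄ : ℂ)
    (h1 : (a₃, a₄) ≠ (0, 1))
    (G : Set (Fin 5 → ℂ))
    (hG : G = {p : Fin 5 → ℂ |
      p 0 * p 2 + p 1 * p 3 = a₃ ∧ 1 + p 0 * p 3 + p 1 * p 4 = a₄}) :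
    (∀ p ∈ G, Matrix.rank
        (!![p 2, p 3, p 0, p 1, 0; p 3, p 4, 0, p 0, p 1] : Matrix (Fin 2) (Fin 5) ℂ) = 2) ∧
    IsConnected G ∧
    (∀ p ∈ G, p 0 ≠ 0 ∨ p 1 ≠ 0) ∧
    Nonempty ({p : Fin 5 → ℂ // p ∈ G ∧ p 0 ≠ 0} ≃ₜ ({c : ℂ // c ≠ 0} × ℂ × ℂ)) ∧
    Nonempty ({p : Fin 5 → ℂ // p ∈ G ∧ p 1 ≠ 0} ≃ₜ ({c : ℂ // c ≠ 0} × ℂ × ℂ)) ∧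
    (∃ p ∈ G, p 0 ≠ 0 ∧ p 1 ≠ 0) := by
  obtain rfl : G = fiber a₃ a₄ := hG
  exact ⟨fun p hp => rank_jacobian_eq_two (ne_zero_or_ne_zero h1 hp), isConnected_fiber h1,
    fun p hp => ne_zero_or_ne_zero h1 hp, ⟨chartZ₂ a₃ a₄⟩, ⟨chartZ₃ a₃ a₄⟩,
    exists_mem_ne_zero_ne_zero a₃ a₄⟩

/-- The generic smooth fiber G over (a₃,a₄) ∉ {(0,0),(0,1)} is a smooth (rank-2 Jacobian)
connected variety covered by the two charts {z₂ ≠ 0} and {z₃ ≠ 0}, each homeomorphic to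
ℂ* × ℂ × ℂ, with nonempty intersection. Coordinates p = (z₂,z₃,w₁,w₂,w₃). -/
theorem generic_fiber_smooth_connected (a₃ a₄ : ℂ)
    (h0 : (a₃, a₄) ≠ (0, 0)) (h1 : (a₃, a₄) ≠ (0, 1))
    (G : Set (Fin 5 → ℂ))
    (hG : G = {p : Fin 5 → ℂ |
      p 0 * p 2 + p 1 * p 3 = a₃ ∧ 1 + p 0 * p 3 + p 1 * p 4 = a₄}) :
    (∀ p ∈ G, Matrix.rank
        (!![p 2, p 3, p 0, p 1, 0; p 3, p 4, 0, p 0, p 1] : Matrix (Fin 2) (Fin 5) ℂ) = 2) ∧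
    IsConnected G ∧
    (∀ p ∈ G, p 0 ≠ 0 ∨ p 1 ≠ 0) ∧
    Nonempty ({p : Fin 5 → ℂ // p ∈ G ∧ p 0 ≠ 0} ≃ₜ ({c : ℂ // c ≠ 0} × ℂ × ℂ)) ∧
    Nonempty ({p : Fin 5 → ℂ // p ∈ G ∧ p 1 ≠ 0} ≃ₜ ({c : ℂ // c ≠ 0} × ℂ × ℂ)) ∧
    (∃ p ∈ G, p 0 ≠ 0 ∧ p 1 ≠ 0) :=
  generic_fiber_smooth_connected_general a₃ a₄ h1 G hG
end
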